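/- Let a, b > 0 be real numbers, let c = arcosh(cosh(a)·cosh(b)), α = arcsin(sinh(a)/sinh(c)), and β = arcsin(sinh(b)/sinh(c)). Then ∫_0^a ∫_0^{artanh((tanh(b)/sinh(a))·sinh(x))} cosh(y) dy dx = π/2 − α − β. -/

import Mathlib

open Real MeasureTheory intervalIntegral

/-- The inverse hyperbolic tangent, `artanh x = (1/2)·log((1+x)/(1−x))`. -/
noncomputable def artanh (x : ℝ) : ℝ := Real.log ((1 + x) / (1 - x)) / 2

/-- The inverse hyperbolic cosine, `arcosh x = log(x + √(x²−1))`. -/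
noncomputable def arcosh (x : ℝ) : ℝ := Real.log (x + Real.sqrt (x ^ 2 - 1))

/-!
The inner integral is `sinh (artanh t) = t / √(1 - t²)` with `t = m sinh x`, `m = tanh b / sinh a`.
With `k = sinh b / sinh c = sin β` one has `1 - k² cosh² x = cos² β (1 - m² sinh² x)` and
`k = m cos β`, so `arcsin (k cosh x)` is an antiderivative of the outer integrand. Its value at
`x = 0` is `β`, and at `x = a` it is `arcsin (cos α) = π/2 - α`, because in a right triangle
`cos α = cosh a sinh b / sinh c`.
-/

theorem artanh_eq_real_artanh {x : ℝ} (hx : x ∈ Set.Icc (-1) 1) :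
    _root_.artanh x = Real.artanh x := by
  rw [Real.artanh_eq_half_log hx, _root_.artanh]
  ring

theorem integral_cosh (a b : ℝ) : ∫ x in a..b, cosh x = sinh b - sinh a :=
  integral_eq_sub_of_hasDerivAt (fun x _ => hasDerivAt_sinh x)
    (continuous_cosh.intervalIntegrable a b)

theorem integral_zero_artanh_cosh {t : ℝ} (ht : t ∈ Set.Ioo (-1) 1) :
    ∫ y in (0:ℝ).._root_.artanh t, cosh y = t / √(1 - t ^ 2) := by
  rw [integral_cosh, sinh_zero, sub_zero, artanh_eq_real_artanh (Set.Ioo_subset_Icc_self ht),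
    Real.sinh_artanh ht]

theorem tanh_div_sinh_mul_sinh_mem_Ico {a b x : ℝ} (hb : 0 ≤ b) (hx : x ∈ Set.Icc 0 a) :
    tanh b / sinh a * sinh x ∈ Set.Ico 0 1 := by
  have htanh : 0 ≤ tanh b := by
    rw [tanh_eq_sinh_div_cosh]
    exact div_nonneg (sinh_nonneg_iff.2 hb) (cosh_pos b).le
  have hsinh_x : 0 ≤ sinh x := sinh_nonneg_iff.2 hx.1
  have hsinh_le : sinh x ≤ sinh a := sinh_le_sinh.2 hx.2
  rw [div_mul_eq_mul_div, mul_div_assoc]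
  exact ⟨mul_nonneg htanh (div_nonneg hsinh_x (hsinh_x.trans hsinh_le)),
    (mul_le_of_le_one_right htanh (div_le_one_of_le₀ hsinh_le (hsinh_x.trans hsinh_le))).trans_lt
      (tanh_lt_one b)⟩

theorem arcsin_cos_arcsin {x : ℝ} (hx : 0 ≤ x) : arcsin (cos (arcsin x)) = π / 2 - arcsin x := by
  rw [arcsin_eq_pi_div_two_sub_arccos,
    arccos_cos (arcsin_nonneg.2 hx) ((arcsin_le_pi_div_two x).trans (by linarith [pi_pos]))]

theorem cos_arcsin_sinh_div_sinh {a b c : ℝ} (ha : 0 ≤ a) (hc : 0 < c)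
    (h : cosh c = cosh a * cosh b) :
    cos (arcsin (sinh b / sinh c)) = sinh a * cosh b / sinh c := by
  have hpythagoras : sinh c ^ 2 = sinh a ^ 2 * cosh b ^ 2 + sinh b ^ 2 := by
    linear_combination (cosh c + cosh a * cosh b) * h + cosh b ^ 2 * cosh_sq a + cosh_sq b
      - cosh_sq c
  have hsq : 1 - (sinh b / sinh c) ^ 2 = (sinh a * cosh b / sinh c) ^ 2 := by
    field_simp
    linear_combination hpythagoras
  rw [cos_arcsin, hsq, sqrt_sq (by have := sinh_nonneg_iff.2 ha; positivity)]

theorem hasDerivAt_arcsin_mul_cosh {k m x : ℝ} (hk : k = m * √(1 - k ^ 2))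
    (hx : (m * sinh x) ^ 2 < 1) :
    HasDerivAt (fun x => arcsin (k * cosh x)) (m * sinh x / √(1 - (m * sinh x) ^ 2)) x := by
  -- if `1 - k² ≤ 0` the square root is `0`, so `hk` forces `k = 0`
  have hk_lt : 0 < 1 - k ^ 2 := by
    by_contra! hle
    rw [sqrt_eq_zero'.2 hle, mul_zero] at hk
    norm_num [hk] at hle
  have hk_sq : k ^ 2 = m ^ 2 * (1 - k ^ 2) := by
    conv_lhs => rw [hk]
    rw [mul_pow, sq_sqrt hk_lt.le]
  have hfactor : 1 - (k * cosh x) ^ 2 = (1 - k ^ 2) * (1 - (m * sinh x) ^ 2) := by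
    linear_combination (-sinh x ^ 2) * hk_sq - k ^ 2 * cosh_sq x
  have hsq_lt : (k * cosh x) ^ 2 < 1 := by
    have := mul_pos hk_lt (sub_pos.2 hx)
    linarith
  obtain ⟨hgt, hlt⟩ := abs_lt.1 ((sq_lt_one_iff_abs_lt_one _).1 hsq_lt)
  refine ((hasDerivAt_arcsin hgt.ne' hlt.ne).comp x ((hasDerivAt_cosh x).const_mul k)).congr_deriv ?_
  rw [hfactor, sqrt_mul hk_lt.le]
  nth_rw 2 [hk]
  field_simp [(sqrt_pos.2 hk_lt).ne']

theorem integral_mul_sinh_div_sqrt {k m a₁ a₂ : ℝ} (hk : k = m * √(1 - k ^ 2))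
    (h : ∀ x ∈ Set.uIcc a₁ a₂, (m * sinh x) ^ 2 < 1) :
    ∫ x in a₁..a₂, m * sinh x / √(1 - (m * sinh x) ^ 2)
      = arcsin (k * cosh a₂) - arcsin (k * cosh a₁) := by
  refine integral_eq_sub_of_hasDerivAt (fun x hx => hasDerivAt_arcsin_mul_cosh hk (h x hx)) ?_
  refine ContinuousOn.intervalIntegrable (ContinuousOn.div (by fun_prop) (by fun_prop) ?_)
  exact fun x hx => (sqrt_pos.2 (by linarith [h x hx])).ne'

/-- Two-dimensional case of the paper's method: the hyperbolic area (`k = 1`) of a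
right triangle with legs `a` and `b`, computed in hyperbolic orthogonal coordinates,
equals its angular defect `π/2 − α − β`, where `c` is the hypotenuse and `α`, `β` are
the angles opposite to `a` and `b`. -/
theorem right_triangle_area (a b : ℝ) (ha : 0 < a) (hb : 0 < b) :
    ∀ c α β : ℝ,
      c = _root_.arcosh (Real.cosh a * Real.cosh b) →
      α = Real.arcsin (Real.sinh a / Real.sinh c) →
      β = Real.arcsin (Real.sinh b / Real.sinh c) →
      (∫ x in (0:ℝ)..a,
          ∫ y in (0:ℝ)..(_root_.artanh ((Real.tanh b / Real.sinh a) * Real.sinh x)),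
            Real.cosh y) = π / 2 - α - β := by
  intro c α β hc hα hβ
  have hcosh_ab : 1 < cosh a * cosh b :=
    one_lt_mul_of_lt_of_le (one_lt_cosh.2 ha.ne') (one_le_cosh b)
  have hc_pos : 0 < c := hc ▸ arcosh_pos hcosh_ab
  have hcosh_c : cosh c = cosh a * cosh b := hc ▸ cosh_arcosh hcosh_ab.le
  have hk : sinh b / sinh c = tanh b / sinh a * √(1 - (sinh b / sinh c) ^ 2) := by
    rw [← cos_arcsin, cos_arcsin_sinh_div_sinh ha.le hc_pos hcosh_c, tanh_eq_sinh_div_cosh]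
    field_simp
  have hmem : ∀ x ∈ Set.uIcc 0 a, tanh b / sinh a * sinh x ∈ Set.Ico 0 1 := fun x hx =>
    tanh_div_sinh_mul_sinh_mem_Ico hb.le (Set.uIcc_of_le ha.le ▸ hx)
  have hinner : Set.EqOn
      (fun x => ∫ y in (0:ℝ)..(_root_.artanh (tanh b / sinh a * sinh x)), cosh y)
      (fun x => tanh b / sinh a * sinh x / √(1 - (tanh b / sinh a * sinh x) ^ 2))
      (Set.uIcc 0 a) := fun x hx =>
    integral_zero_artanh_cosh ⟨by linarith [(hmem x hx).1], (hmem x hx).2⟩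
  have hcos_α : cos α = sinh b / sinh c * cosh a := by
    rw [hα, cos_arcsin_sinh_div_sinh hb.le hc_pos (by rw [hcosh_c, mul_comm])]
    ring
  rw [integral_congr hinner,
    integral_mul_sinh_div_sqrt hk fun x hx => pow_lt_one₀ (hmem x hx).1 (hmem x hx).2 two_ne_zero,
    cosh_zero, mul_one, ← hβ, ← hcos_α, hα,
    arcsin_cos_arcsin (div_nonneg (sinh_nonneg_iff.2 ha.le) (sinh_pos_iff.2 hc_pos).le)]
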